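/- For every positive integer n, R_n = (1/2) * R_{n-1} + 1/n, where R_n = (1/n) * Σ_{k=0}^{n-1} 1/C(n-1,k) and R_0 = 0. -/

import Mathlib

/-!
Write `S p = ∑_{k ≤ p} 1 / C(p, k)`, so that `R (p + 1) = S p / (p + 1)`. Since
`C(p + 1, k) = (p + 1) C(p, k) / (p + 1 - k)` and `C(p + 1, k + 1) = (p + 1) C(p, k) / (k + 1)`,
consecutive reciprocals pair up as `1 / C(p + 1, k) + 1 / C(p + 1, k + 1) = (p + 2) / ((p + 1) C(p, k))`.
Summing over `k ≤ p` counts every term of `S (p + 1)` twice except the two end terms `1`, whence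
`2 S (p + 1) = (p + 2) / (p + 1) * S p + 2`, which is the recurrence after dividing by `2 (p + 2)`.
-/

open Finset

section InverseBinomialSums

variable {K : Type*} [Field K] [CharZero K]

theorem inv_choose_succ_add_inv_choose_succ_succ {p k : ℕ} (hk : k ≤ p) :
    ((p + 1).choose k : K)⁻¹ + ((p + 1).choose (k + 1) : K)⁻¹ =
      (p + 2) / ((p + 1) * p.choose k) := by
  have hc : (p.choose k : K) ≠ 0 := Nat.cast_ne_zero.mpr (Nat.choose_pos hk).ne'
  have ha : ((p + 1).choose k : K) ≠ 0 := Nat.cast_ne_zero.mpr (Nat.choose_pos (by omega)).ne'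
  have hb : ((p + 1).choose (k + 1) : K) ≠ 0 :=
    Nat.cast_ne_zero.mpr (Nat.choose_pos (by omega)).ne'
  have hp : (p + 1 : K) ≠ 0 := Nat.cast_add_one_ne_zero p
  have hlow : ((p + 1).choose k : K) * (p + 1 - k) = p.choose k * (p + 1) := by
    have := congrArg (Nat.cast (R := K)) (Nat.choose_mul_succ_eq p k)
    push_cast [Nat.cast_sub (show k ≤ p + 1 by omega)] at this
    exact this.symm
  have hhigh : ((p + 1).choose (k + 1) : K) * (k + 1) = p.choose k * (p + 1) := by
    rw [mul_comm _ (p + 1 : K)]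
    exact_mod_cast (Nat.add_one_mul_choose_eq p k).symm
  have hlow' : ((p + 1).choose k : K)⁻¹ * (p.choose k * (p + 1)) = p + 1 - k := by
    rw [← hlow, inv_mul_cancel_left₀ ha]
  have hhigh' : ((p + 1).choose (k + 1) : K)⁻¹ * (p.choose k * (p + 1)) = k + 1 := by
    rw [← hhigh, inv_mul_cancel_left₀ hb]
  rw [eq_div_iff (mul_ne_zero hp hc), mul_comm (p + 1 : K), add_mul, hlow', hhigh']
  ring

theorem two_mul_sum_inv_choose_succ (p : ℕ) :
    2 * ∑ k ∈ range (p + 2), ((p + 1).choose k : K)⁻¹ =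
      (p + 2) / (p + 1) * ∑ k ∈ range (p + 1), (p.choose k : K)⁻¹ + 2 := by
  have hpairs : ∑ k ∈ range (p + 1),
      (((p + 1).choose k : K)⁻¹ + ((p + 1).choose (k + 1) : K)⁻¹) =
        (p + 2) / (p + 1) * ∑ k ∈ range (p + 1), (p.choose k : K)⁻¹ := by
    rw [mul_sum]
    refine sum_congr rfl fun k hk => ?_
    have hk : k ≤ p := Nat.lt_succ_iff.mp (mem_range.mp hk)
    rw [inv_choose_succ_add_inv_choose_succ_succ hk, div_mul_eq_div_div, div_eq_mul_inv]
  have hlast : ∑ k ∈ range (p + 2), ((p + 1).choose k : K)⁻¹ =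
      ∑ k ∈ range (p + 1), ((p + 1).choose k : K)⁻¹ + 1 := by
    rw [sum_range_succ, Nat.choose_self, Nat.cast_one, inv_one]
  have hfirst : ∑ k ∈ range (p + 2), ((p + 1).choose k : K)⁻¹ =
      ∑ k ∈ range (p + 1), ((p + 1).choose (k + 1) : K)⁻¹ + 1 := by
    rw [sum_range_succ', Nat.choose_zero_right, Nat.cast_one, inv_one]
  rw [← hpairs, sum_add_distrib]
  linear_combination hlast + hfirst

end InverseBinomialSums

theorem stmt_3 (n : ℕ)
    (R : ℕ → ℝ)
    (hR : ∀ m, R m = (1 / m : ℝ) * ∑ k ∈ Finset.range m, (1 : ℝ) / (m - 1).choose k) :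
    R n = (1 / 2) * R (n - 1) + 1 / n := by
  rw [hR, hR]
  match n with
  | 0 => simp
  | 1 => simp
  | p + 2 =>
    rw [show p + 2 - 1 = p + 1 from rfl, show p + 1 - 1 = p from rfl]
    have h := two_mul_sum_inv_choose_succ (K := ℝ) p
    simp only [one_div]
    push_cast
    set A := ∑ k ∈ range (p + 2), ((p + 1).choose k : ℝ)⁻¹
    set B := ∑ k ∈ range (p + 1), (p.choose k : ℝ)⁻¹
    field_simp at h ⊢
    linear_combination h
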